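/- For each n ∈ ℕ* let xₙ : ℝ₊ → (1/(2n+1), 1/(2n)) be decreasing with lim_{t→∞} xₙ(t) = 1/(2n+1), and let X be the closure of all translates of the xₙ. The skew-evolution semiflow on X × ℝ³ with Ψ(t,t₀,x)(v₁,v₂,v₃) = (e^{−∫_{t₀}^t x(s)ds}v₁, e^{∫_{t₀}^t x(s)ds}v₂, e^{∫_{t₀}^t x(s)ds}v₃) and projections P₁(v)=(v₁,0,0), P₂(v)=(0,v₂,0), P₀(v)=(0,0,v₃) is NOT globally uniformly exponentially trichotomic with these projections, but it IS pointwise uniformly exponentially trichotomic at every point x ∈ X (with constant projection families P̃ₖ(t) = Pₖ). -/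

import Mathlib

open Real Filter

/-- The ℓ¹ norm on ℝ³. -/
def nrm (v : Fin 3 → ℝ) : ℝ := |v 0| + |v 1| + |v 2|

/-- The cocycle of the counterexample:
`Ψ(t,t₀,x)v = (e^{−∫x}v₁, e^{∫x}v₂, e^{∫x}v₃)`. -/
noncomputable def coc (x : ℝ → ℝ) (t t₀ : ℝ) (v : Fin 3 → ℝ) : Fin 3 → ℝ :=
  ![Real.exp (-(∫ s in t₀..t, x s)) * v 0,
    Real.exp (∫ s in t₀..t, x s) * v 1,
    Real.exp (∫ s in t₀..t, x s) * v 2]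

def proj1 (v : Fin 3 → ℝ) : Fin 3 → ℝ := ![v 0, 0, 0]
def proj2 (v : Fin 3 → ℝ) : Fin 3 → ℝ := ![0, v 1, 0]
def proj0 (v : Fin 3 → ℝ) : Fin 3 → ℝ := ![0, 0, v 2]

/-- The semiflow of the counterexample: translation. -/
def orbitTranslate (x : ℝ → ℝ) (t s : ℝ) : ℝ → ℝ := fun τ => x (t - s + τ)

/-!
The cocycle only depends on `∫ x`, and every `x ∈ X` lies between `a = 1/(2n+1)` and
`b = 1/(2n)` for some `n`. Uniform dichotomy on the first coordinate would force
`∫ₜ₀ᵗ x ≥ ν₁ (t - t₀) - log N₁` for all `x ∈ X`, which fails for any `x` with values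
below `ν₁ / 2`. At a fixed point `x`, the exponent along the orbit is
`J(t) = ∫ₜ^{2t-t₀} x`, and `J(t) - J(s) = ∫_{2s-t₀}^{2t-t₀} x - ∫ₛᵗ x` lies between
`(2a - b)(t - s)` and `(2b - a)(t - s)`; the rate `2a - b` is positive since
`1/(2n) < 2/(2n+1)`.
-/

open MeasureTheory Set

def IsGloballyUniformlyExpTrichotomic (X : Set (ℝ → ℝ)) : Prop :=
  ∃ N₀ N₁ N₂ ν₀ ν₁ ν₂ : ℝ, 1 < N₀ ∧ 1 < N₁ ∧ 1 < N₂ ∧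
    0 < ν₀ ∧ 0 < ν₁ ∧ 0 < ν₂ ∧
    ∀ x ∈ X, ∀ t t₀ : ℝ, 0 ≤ t₀ → t₀ ≤ t → ∀ v : Fin 3 → ℝ,
      (Real.exp (ν₁ * (t - t₀)) * nrm (coc x t t₀ (proj1 v)) ≤ N₁ * nrm (proj1 v)) ∧
      (Real.exp (ν₂ * (t - t₀)) * nrm (proj2 v) ≤ N₂ * nrm (coc x t t₀ (proj2 v))) ∧
      (nrm (proj0 v) ≤ N₀ * Real.exp (ν₀ * (t - t₀)) * nrm (coc x t t₀ (proj0 v))) ∧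
      (nrm (coc x t t₀ (proj0 v)) ≤
        N₀ ^ 2 * Real.exp (2 * ν₀ * (t - t₀)) * nrm (proj0 v))

def IsPointwiseUniformlyExpTrichotomicAt (x : ℝ → ℝ) : Prop :=
  ∃ N₀ N₁ N₂ ν₀ ν₁ ν₂ : ℝ, 1 < N₀ ∧ 1 < N₁ ∧ 1 < N₂ ∧
    0 < ν₀ ∧ 0 < ν₁ ∧ 0 < ν₂ ∧
    ∀ t s t₀ : ℝ, 0 ≤ t₀ → t₀ ≤ s → s ≤ t → ∀ v : Fin 3 → ℝ,
      (nrm (coc (orbitTranslate x s t₀) s t₀ (proj0 v)) ≤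
        N₀ * Real.exp (ν₀ * (t - s)) * nrm (coc (orbitTranslate x t t₀) t t₀ (proj0 v))) ∧
      (nrm (coc (orbitTranslate x t t₀) t t₀ (proj0 v)) ≤
        N₀ * Real.exp (ν₀ * (t - s)) * nrm (coc (orbitTranslate x s t₀) s t₀ (proj0 v))) ∧
      (Real.exp (ν₁ * (t - s)) * nrm (coc (orbitTranslate x t t₀) t t₀ (proj1 v)) ≤
        N₁ * nrm (coc (orbitTranslate x s t₀) s t₀ (proj1 v))) ∧
      (Real.exp (ν₂ * (t - s)) * nrm (coc (orbitTranslate x s t₀) s t₀ (proj2 v)) ≤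
        N₂ * nrm (coc (orbitTranslate x t t₀) t t₀ (proj2 v)))

section Integrals

variable {x : ℝ → ℝ}

lemma AntitoneOn.locallyIntegrableOn_Ici (hx : AntitoneOn x (Ici 0)) :
    LocallyIntegrableOn x (Ici 0) :=
  (locallyIntegrableOn_iff isClosed_Ici.isLocallyClosed).2 fun _ hk hkc =>
    (hx.mono hk).integrableOn_isCompact hkc

lemma MeasureTheory.LocallyIntegrableOn.intervalIntegrable_of_nonneg
    (hx : LocallyIntegrableOn x (Ici 0)) {c d : ℝ} (hc : 0 ≤ c) (hd : 0 ≤ d) :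
    IntervalIntegrable x volume c d :=
  (hx.integrableOn_compact_subset (fun _ hw => le_trans (le_min hc hd) hw.1)
    isCompact_uIcc).intervalIntegrable

lemma mul_sub_le_integral_of_le {a c d : ℝ} (hcd : c ≤ d)
    (hint : IntervalIntegrable x volume c d) (h : ∀ s ∈ Icc c d, a ≤ x s) :
    a * (d - c) ≤ ∫ s in c..d, x s := by
  simpa [mul_comm] using intervalIntegral.integral_mono_on hcd intervalIntegrable_const hint h

lemma integral_le_mul_sub_of_le {b c d : ℝ} (hcd : c ≤ d)
    (hint : IntervalIntegrable x volume c d) (h : ∀ s ∈ Icc c d, x s ≤ b) :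
    ∫ s in c..d, x s ≤ b * (d - c) := by
  simpa [mul_comm] using intervalIntegral.integral_mono_on hcd hint intervalIntegrable_const h

lemma integral_orbitTranslate (x : ℝ → ℝ) (t t₀ : ℝ) :
    ∫ u in t₀..t, orbitTranslate x t t₀ u = ∫ w in t..2 * t - t₀, x w := by
  simp only [orbitTranslate]
  rw [intervalIntegral.integral_comp_add_left x (t - t₀)]
  ring_nf

lemma integral_orbitTranslate_sub (hx : LocallyIntegrableOn x (Ici 0)) {t s t₀ : ℝ}
    (h₀ : 0 ≤ t₀) (hs : t₀ ≤ s) (ht : s ≤ t) :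
    (∫ u in t₀..t, orbitTranslate x t t₀ u) - ∫ u in t₀..s, orbitTranslate x s t₀ u =
      (∫ w in 2 * s - t₀..2 * t - t₀, x w) - ∫ w in s..t, x w := by
  have hint {c d : ℝ} (hc : 0 ≤ c) (hd : 0 ≤ d) := hx.intervalIntegrable_of_nonneg hc hd
  rw [integral_orbitTranslate, integral_orbitTranslate,
    intervalIntegral.integral_interval_sub_interval_comm' (hint (by linarith) (by linarith))
      (hint (by linarith) (by linarith)) (hint (by linarith) (by linarith))]

lemma integral_orbitTranslate_sub_mem_Icc (hx : LocallyIntegrableOn x (Ici 0)) {a b t s t₀ : ℝ}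
    (hxa : ∀ s, 0 ≤ s → a ≤ x s) (hxb : ∀ s, 0 ≤ s → x s ≤ b)
    (h₀ : 0 ≤ t₀) (hs : t₀ ≤ s) (ht : s ≤ t) :
    (∫ u in t₀..t, orbitTranslate x t t₀ u) - ∫ u in t₀..s, orbitTranslate x s t₀ u ∈
      Icc ((2 * a - b) * (t - s)) ((2 * b - a) * (t - s)) := by
  rw [integral_orbitTranslate_sub hx h₀ hs ht]
  have hint {c d : ℝ} (hc : 0 ≤ c) (hd : 0 ≤ d) := hx.intervalIntegrable_of_nonneg hc hd
  have hs₀ : 0 ≤ s := h₀.trans hs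
  have hlong : 2 * s - t₀ ≤ 2 * t - t₀ := by linarith
  have hlong₀ : 0 ≤ 2 * s - t₀ := by linarith
  have h₁ := mul_sub_le_integral_of_le hlong (hint hlong₀ (hlong₀.trans hlong))
    fun w hw => hxa w (hlong₀.trans hw.1)
  have h₂ := integral_le_mul_sub_of_le hlong (hint hlong₀ (hlong₀.trans hlong))
    fun w hw => hxb w (hlong₀.trans hw.1)
  have h₃ := mul_sub_le_integral_of_le ht (hint hs₀ (hs₀.trans ht))
    fun w hw => hxa w (hs₀.trans hw.1)
  have h₄ := integral_le_mul_sub_of_le ht (hint hs₀ (hs₀.trans ht))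
    fun w hw => hxb w (hs₀.trans hw.1)
  constructor <;> linarith

end Integrals

lemma nrm_coc_proj0 (y : ℝ → ℝ) (t t₀ : ℝ) (v : Fin 3 → ℝ) :
    nrm (coc y t t₀ (proj0 v)) = Real.exp (∫ u in t₀..t, y u) * |v 2| := by
  simp [nrm, coc, proj0, abs_mul]

lemma nrm_coc_proj1 (y : ℝ → ℝ) (t t₀ : ℝ) (v : Fin 3 → ℝ) :
    nrm (coc y t t₀ (proj1 v)) = Real.exp (-∫ u in t₀..t, y u) * |v 0| := by
  simp [nrm, coc, proj1, abs_mul]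

lemma nrm_coc_proj2 (y : ℝ → ℝ) (t t₀ : ℝ) (v : Fin 3 → ℝ) :
    nrm (coc y t t₀ (proj2 v)) = Real.exp (∫ u in t₀..t, y u) * |v 1| := by
  simp [nrm, coc, proj2, abs_mul]

lemma nrm_proj1 (v : Fin 3 → ℝ) : nrm (proj1 v) = |v 0| := by
  simp [nrm, proj1]

theorem not_isGloballyUniformlyExpTrichotomic {X : Set (ℝ → ℝ)}
    (hX : ∀ ε > 0, ∃ x ∈ X, LocallyIntegrableOn x (Ici 0) ∧ ∀ s, 0 ≤ s → x s ≤ ε) :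
    ¬ IsGloballyUniformlyExpTrichotomic X := by
  rintro ⟨_, N₁, _, _, ν₁, _, _, hN₁, _, _, hν₁, _, H⟩
  obtain ⟨x, hxX, hint, hxε⟩ := hX (ν₁ / 2) (by positivity)
  set T := 2 * N₁ / ν₁
  have hT : 0 ≤ T := by positivity
  have hI : ∫ s in 0..T, x s ≤ ν₁ / 2 * (T - 0) :=
    integral_le_mul_sub_of_le hT (hint.intervalIntegrable_of_nonneg le_rfl hT)
      fun s hs => hxε s hs.1
  have hνT : ν₁ * T = 2 * N₁ := by simp only [T]; field_simp
  have hbound := (H x hxX T 0 le_rfl hT ![1, 0, 0]).1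
  rw [nrm_coc_proj1, nrm_proj1] at hbound
  simp only [sub_zero, Matrix.cons_val_zero, abs_one, mul_one, ← Real.exp_add] at hbound
  have : Real.exp N₁ ≤ N₁ :=
    (Real.exp_le_exp.2 (by linarith)).trans hbound
  linarith [Real.add_one_le_exp N₁]

theorem isPointwiseUniformlyExpTrichotomicAt_of_bounds {x : ℝ → ℝ}
    (hx : LocallyIntegrableOn x (Ici 0)) {a b : ℝ} (ha : 0 < a) (hab : b < 2 * a)
    (hxa : ∀ s, 0 ≤ s → a ≤ x s) (hxb : ∀ s, 0 ≤ s → x s ≤ b) :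
    IsPointwiseUniformlyExpTrichotomicAt x := by
  have hb : 0 < b := ha.trans_le ((hxa 0 le_rfl).trans (hxb 0 le_rfl))
  refine ⟨2, 2, 2, 2 * b, 2 * a - b, 2 * a - b, one_lt_two, one_lt_two, one_lt_two,
    by linarith, by linarith, by linarith, fun t s t₀ h₀ hs ht v => ?_⟩
  obtain ⟨hlow, hup⟩ := integral_orbitTranslate_sub_mem_Icc hx hxa hxb h₀ hs ht
  simp only [nrm_coc_proj0, nrm_coc_proj1, nrm_coc_proj2]
  set Jt := ∫ u in t₀..t, orbitTranslate x t t₀ u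
  set Js := ∫ u in t₀..s, orbitTranslate x s t₀ u
  have hts : 0 ≤ t - s := sub_nonneg.2 ht
  have hexp {A B c : ℝ} (h : A ≤ B) (hc : 0 ≤ c) : Real.exp A * c ≤ 2 * (Real.exp B * c) :=
    (mul_le_mul_of_nonneg_right (Real.exp_le_exp.2 h) hc).trans
      (le_mul_of_one_le_left (by positivity) one_le_two)
  refine ⟨?_, ?_, ?_, ?_⟩
  · have := hexp (A := Js) (B := 2 * b * (t - s) + Jt) (by nlinarith) (abs_nonneg (v 2))
    rw [Real.exp_add] at this; linarith
  · have := hexp (A := Jt) (B := 2 * b * (t - s) + Js) (by nlinarith) (abs_nonneg (v 2))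
    rw [Real.exp_add] at this; linarith
  · have := hexp (A := (2 * a - b) * (t - s) + -Jt) (B := -Js) (by linarith) (abs_nonneg (v 0))
    rw [Real.exp_add] at this; linarith
  · have := hexp (A := (2 * a - b) * (t - s) + Js) (B := Jt) (by linarith) (abs_nonneg (v 1))
    rw [Real.exp_add] at this; linarith

theorem stmt7_general
    (X : Set (ℝ → ℝ))
    (hXmono : ∀ x ∈ X, AntitoneOn x (Set.Ici 0))
    (hXbd : ∀ x ∈ X, ∃ n : ℕ, 0 < n ∧
      (∀ s : ℝ, 0 ≤ s → 1 / (2 * (n : ℝ) + 1) ≤ x s ∧ x s ≤ 1 / (2 * (n : ℝ))) ∧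
      Tendsto x atTop (nhds (1 / (2 * (n : ℝ) + 1))))
    (hXall : ∀ n : ℕ, 0 < n → ∃ x ∈ X,
      ∀ s : ℝ, 0 ≤ s → 1 / (2 * (n : ℝ) + 1) ≤ x s ∧ x s ≤ 1 / (2 * (n : ℝ))) :
    -- not globally uniformly exponentially trichotomic
    (¬ ∃ N₀ N₁ N₂ ν₀ ν₁ ν₂ : ℝ, 1 < N₀ ∧ 1 < N₁ ∧ 1 < N₂ ∧
      0 < ν₀ ∧ 0 < ν₁ ∧ 0 < ν₂ ∧
      ∀ x ∈ X, ∀ t t₀ : ℝ, 0 ≤ t₀ → t₀ ≤ t → ∀ v : Fin 3 → ℝ,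
        (Real.exp (ν₁ * (t - t₀)) * nrm (coc x t t₀ (proj1 v)) ≤ N₁ * nrm (proj1 v)) ∧
        (Real.exp (ν₂ * (t - t₀)) * nrm (proj2 v) ≤ N₂ * nrm (coc x t t₀ (proj2 v))) ∧
        (nrm (proj0 v) ≤ N₀ * Real.exp (ν₀ * (t - t₀)) * nrm (coc x t t₀ (proj0 v))) ∧
        (nrm (coc x t t₀ (proj0 v)) ≤
          N₀ ^ 2 * Real.exp (2 * ν₀ * (t - t₀)) * nrm (proj0 v))) ∧
    -- but pointwise uniformly exponentially trichotomic at every point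
    (∀ x ∈ X, ∃ N₀ N₁ N₂ ν₀ ν₁ ν₂ : ℝ, 1 < N₀ ∧ 1 < N₁ ∧ 1 < N₂ ∧
      0 < ν₀ ∧ 0 < ν₁ ∧ 0 < ν₂ ∧
      ∀ t s t₀ : ℝ, 0 ≤ t₀ → t₀ ≤ s → s ≤ t → ∀ v : Fin 3 → ℝ,
        (nrm (coc (orbitTranslate x s t₀) s t₀ (proj0 v)) ≤
          N₀ * Real.exp (ν₀ * (t - s)) * nrm (coc (orbitTranslate x t t₀) t t₀ (proj0 v))) ∧
        (nrm (coc (orbitTranslate x t t₀) t t₀ (proj0 v)) ≤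
          N₀ * Real.exp (ν₀ * (t - s)) * nrm (coc (orbitTranslate x s t₀) s t₀ (proj0 v))) ∧
        (Real.exp (ν₁ * (t - s)) * nrm (coc (orbitTranslate x t t₀) t t₀ (proj1 v)) ≤
          N₁ * nrm (coc (orbitTranslate x s t₀) s t₀ (proj1 v))) ∧
        (Real.exp (ν₂ * (t - s)) * nrm (coc (orbitTranslate x s t₀) s t₀ (proj2 v)) ≤
          N₂ * nrm (coc (orbitTranslate x t t₀) t t₀ (proj2 v)))) := by
  refine ⟨not_isGloballyUniformlyExpTrichotomic fun ε hε => ?_, fun x hx => ?_⟩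
  · obtain ⟨n, hn⟩ := exists_nat_gt (1 / ε)
    have hn₀ : (0 : ℝ) < n := (one_div_pos.2 hε).trans hn
    obtain ⟨x, hxX, hbd⟩ := hXall n (by exact_mod_cast hn₀)
    have hsmall : 1 / (2 * (n : ℝ)) ≤ ε := by
      rw [div_lt_iff₀ hε] at hn
      rw [div_le_iff₀ (by positivity)]
      linarith
    exact ⟨x, hxX, (hXmono x hxX).locallyIntegrableOn_Ici,
      fun s hs => (hbd s hs).2.trans hsmall⟩
  · obtain ⟨n, hn, hbd, -⟩ := hXbd x hx
    have hn₁ : (1 : ℝ) ≤ n := by exact_mod_cast hn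
    refine isPointwiseUniformlyExpTrichotomicAt_of_bounds (hXmono x hx).locallyIntegrableOn_Ici
      (by positivity) ?_ (fun s hs => (hbd s hs).1) (fun s hs => (hbd s hs).2)
    rw [mul_one_div, div_lt_div_iff₀ (by positivity) (by positivity)]
    linarith

/-- The skew-evolution semiflow of the counterexample is not globally uniformly
exponentially trichotomic, but it is pointwise uniformly exponentially
trichotomic at every `x ∈ X` (with the constant projection families). -/
theorem stmt7
    (X : Set (ℝ → ℝ))
    (hXmono : ∀ x ∈ X, AntitoneOn x (Set.Ici 0))
    (hXtr : ∀ x ∈ X, ∀ u : ℝ, 0 ≤ u → (fun τ => x (u + τ)) ∈ X)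
    (hXbd : ∀ x ∈ X, ∃ n : ℕ, 0 < n ∧
      (∀ s : ℝ, 0 ≤ s → 1 / (2 * (n : ℝ) + 1) ≤ x s ∧ x s ≤ 1 / (2 * (n : ℝ))) ∧
      Tendsto x atTop (nhds (1 / (2 * (n : ℝ) + 1))))
    (hXall : ∀ n : ℕ, 0 < n → ∃ x ∈ X,
      ∀ s : ℝ, 0 ≤ s → 1 / (2 * (n : ℝ) + 1) ≤ x s ∧ x s ≤ 1 / (2 * (n : ℝ))) :
    -- not globally uniformly exponentially trichotomic
    (¬ ∃ N₀ N₁ N₂ ν₀ ν₁ ν₂ : ℝ, 1 < N₀ ∧ 1 < N₁ ∧ 1 < N₂ ∧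
      0 < ν₀ ∧ 0 < ν₁ ∧ 0 < ν₂ ∧
      ∀ x ∈ X, ∀ t t₀ : ℝ, 0 ≤ t₀ → t₀ ≤ t → ∀ v : Fin 3 → ℝ,
        (Real.exp (ν₁ * (t - t₀)) * nrm (coc x t t₀ (proj1 v)) ≤ N₁ * nrm (proj1 v)) ∧
        (Real.exp (ν₂ * (t - t₀)) * nrm (proj2 v) ≤ N₂ * nrm (coc x t t₀ (proj2 v))) ∧
        (nrm (proj0 v) ≤ N₀ * Real.exp (ν₀ * (t - t₀)) * nrm (coc x t t₀ (proj0 v))) ∧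
        (nrm (coc x t t₀ (proj0 v)) ≤
          N₀ ^ 2 * Real.exp (2 * ν₀ * (t - t₀)) * nrm (proj0 v))) ∧
    -- but pointwise uniformly exponentially trichotomic at every point
    (∀ x ∈ X, ∃ N₀ N₁ N₂ ν₀ ν₁ ν₂ : ℝ, 1 < N₀ ∧ 1 < N₁ ∧ 1 < N₂ ∧
      0 < ν₀ ∧ 0 < ν₁ ∧ 0 < ν₂ ∧
      ∀ t s t₀ : ℝ, 0 ≤ t₀ → t₀ ≤ s → s ≤ t → ∀ v : Fin 3 → ℝ,
        (nrm (coc (orbitTranslate x s t₀) s t₀ (proj0 v)) ≤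
          N₀ * Real.exp (ν₀ * (t - s)) * nrm (coc (orbitTranslate x t t₀) t t₀ (proj0 v))) ∧
        (nrm (coc (orbitTranslate x t t₀) t t₀ (proj0 v)) ≤
          N₀ * Real.exp (ν₀ * (t - s)) * nrm (coc (orbitTranslate x s t₀) s t₀ (proj0 v))) ∧
        (Real.exp (ν₁ * (t - s)) * nrm (coc (orbitTranslate x t t₀) t t₀ (proj1 v)) ≤
          N₁ * nrm (coc (orbitTranslate x s t₀) s t₀ (proj1 v))) ∧
        (Real.exp (ν₂ * (t - s)) * nrm (coc (orbitTranslate x s t₀) s t₀ (proj2 v)) ≤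
          N₂ * nrm (coc (orbitTranslate x t t₀) t t₀ (proj2 v)))) :=
  stmt7_general X hXmono hXbd hXall
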